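/- arXiv:2509.09579 — 8 statements merged into one kernel-verified Lean document; each statement's English description precedes it below -/
import Mathlib

section
/- For every a ∈ [0,1), b := √(1−a²), ε ∈ (0,1), and all (z,w) ∈ ℂ² with |z|² + |w|² < 1, one has |z² + 2bw|² + ε²|a²w − bz²|² < (2 − a²)². -/
/-!
Expanding both squared norms, the phases of `z²` and `w` enter only through
`2b(2 - ε²a²) Re(z² w̄)`, whose coefficient is nonnegative; bounding `Re(z² w̄) ≤ ‖z‖²‖w‖` reduces
the claim to real `z, w ≥ 0`. There, after bounding `ε²` by `1` and using `a² + b² = 1`, the left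
side factors as `(1 + b²)(s² + 2bYs + (1 + b²)Y²)` with `s = ‖z‖² < 1 - Y²`, `Y = ‖w‖`, and the
second factor falls short of `1 + b²` by more than `(1 - Y²)(b - Y)² ≥ 0`.
-/

theorem sq_norm_add_smul_add_mul_sq_norm_smul_sub_smul_le {F : Type*} [NormedAddCommGroup F]
    [InnerProductSpace ℝ F] (u v : F) {c d e t : ℝ} (h : t * d * e ≤ c) :
    ‖u + c • v‖ ^ 2 + t * ‖d • v - e • u‖ ^ 2
      ≤ (‖u‖ + c * ‖v‖) ^ 2 + t * (d * ‖v‖ - e * ‖u‖) ^ 2 := by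
  have hcs := mul_le_mul_of_nonneg_left (real_inner_le_norm u v) (sub_nonneg.2 h)
  rw [norm_add_sq_real, norm_sub_sq_real, norm_smul, norm_smul, norm_smul,
    real_inner_smul_right, real_inner_smul_left, real_inner_smul_right, real_inner_comm u v]
  simp only [Real.norm_eq_abs, mul_pow, sq_abs]
  nlinarith

theorem sq_add_two_mul_mul_add_mul_sq_lt {b s y : ℝ} (hb : 0 ≤ b) (hs : 0 ≤ s) (hy : 0 ≤ y)
    (hsy : s + y ^ 2 < 1) :
    s ^ 2 + 2 * b * y * s + (1 + b ^ 2) * y ^ 2 < 1 + b ^ 2 := by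
  have hmono : s ^ 2 + 2 * b * y * s < (1 - y ^ 2) ^ 2 + 2 * b * y * (1 - y ^ 2) := by
    nlinarith [mul_nonneg hb hy]
  have hgap : 0 ≤ (1 - y ^ 2) * (b - y) ^ 2 := mul_nonneg (by linarith) (sq_nonneg _)
  nlinarith

theorem sq_add_two_mul_add_mul_sq_sub_lt {a b ε x y : ℝ} (hab : a ^ 2 + b ^ 2 = 1) (hb : 0 ≤ b)
    (hε : ε ^ 2 ≤ 1) (hy : 0 ≤ y) (hxy : x ^ 2 + y ^ 2 < 1) :
    (x ^ 2 + 2 * b * y) ^ 2 + ε ^ 2 * (a ^ 2 * y - b * x ^ 2) ^ 2 < (2 - a ^ 2) ^ 2 := by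
  have ha : a ^ 2 = 1 - b ^ 2 := by linarith
  have hdrop : ε ^ 2 * (a ^ 2 * y - b * x ^ 2) ^ 2 ≤ (a ^ 2 * y - b * x ^ 2) ^ 2 :=
    mul_le_of_le_one_left (sq_nonneg _) hε
  have hfactor : (x ^ 2 + 2 * b * y) ^ 2 + (a ^ 2 * y - b * x ^ 2) ^ 2
      = (1 + b ^ 2) * ((x ^ 2) ^ 2 + 2 * b * y * x ^ 2 + (1 + b ^ 2) * y ^ 2) := by
    rw [ha]; ring
  have hlt := mul_lt_mul_of_pos_left
    (sq_add_two_mul_mul_add_mul_sq_lt hb (sq_nonneg x) hy hxy) (by positivity : 0 < 1 + b ^ 2)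
  rw [ha]
  nlinarith

theorem stmt0 (a ε : ℝ) (ha : a ∈ Set.Ico (0:ℝ) 1) (hε : ε ∈ Set.Ioo (0:ℝ) 1)
    (b : ℝ) (hb : b = Real.sqrt (1 - a^2))
    (z w : ℂ) (hzw : ‖z‖ ^ 2 + ‖w‖ ^ 2 < 1) :
    ‖z^2 + 2*(b:ℂ)*w‖ ^ 2 + ε^2 * ‖(a:ℂ)^2*w - (b:ℂ)*z^2‖ ^ 2
      < (2 - a^2)^2 := by
  have ha2 : a ^ 2 < 1 := by nlinarith [ha.1, ha.2]
  have hε2 : ε ^ 2 < 1 := by nlinarith [hε.1, hε.2]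
  have hb0 : 0 ≤ b := hb ▸ Real.sqrt_nonneg _
  have hab : a ^ 2 + b ^ 2 = 1 := by rw [hb, Real.sq_sqrt (by linarith)]; ring
  have hcoef : ε ^ 2 * a ^ 2 * b ≤ 2 * b :=
    mul_le_mul_of_nonneg_right (by nlinarith [sq_nonneg ε, sq_nonneg a]) hb0
  have hphase := sq_norm_add_smul_add_mul_sq_norm_smul_sub_smul_le (z ^ 2) w hcoef
  simp only [Complex.real_smul, norm_pow] at hphase
  push_cast at hphase
  calc ‖z^2 + 2*(b:ℂ)*w‖ ^ 2 + ε^2 * ‖(a:ℂ)^2*w - (b:ℂ)*z^2‖ ^ 2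
      ≤ (‖z‖ ^ 2 + 2 * b * ‖w‖) ^ 2 + ε ^ 2 * (a ^ 2 * ‖w‖ - b * ‖z‖ ^ 2) ^ 2 := hphase
    _ < (2 - a ^ 2) ^ 2 :=
      sq_add_two_mul_add_mul_sq_sub_lt hab hb0 hε2.le (norm_nonneg w) hzw
end

section
/- For every b ∈ [0,1], ε ∈ (0,1), and r ∈ [0,1], the real polynomial f(r) := (1 − r² + 2br)² + ε²(a²r − b(1 − r²))², where a² = 1 − b², satisfies f(r) ≤ (1 + b²)², with equality at r = b. -/
theorem stmt1 (b ε : ℝ) (hb : b ∈ Set.Icc (0:ℝ) 1) (hε : ε ∈ Set.Ioo (0:ℝ) 1)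
    (f : ℝ → ℝ)
    (hf : ∀ r, f r = (1 - r^2 + 2*b*r)^2 + ε^2 * ((1 - b^2)*r - b*(1 - r^2))^2) :
    (∀ r ∈ Set.Icc (0:ℝ) 1, f r ≤ (1 + b^2)^2) ∧ f b = (1 + b^2)^2 := by
  obtain ⟨hb0, hb1⟩ := hb
  obtain ⟨he0, he1⟩ := hε
  constructor
  · intro r ⟨hr0, hr1⟩
    rw [hf]
    nlinarith [sq_nonneg (b - r), sq_nonneg ((1 - b^2)*r - b*(1 - r^2)),
      mul_nonneg (mul_nonneg (by nlinarith : (0:ℝ) ≤ 1 - r^2) (by nlinarith : (0:ℝ) ≤ 1 + b^2)) (sq_nonneg (b - r)),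
      mul_nonneg (by nlinarith : (0:ℝ) ≤ 1 - ε^2) (sq_nonneg ((1 - b^2)*r - b*(1 - r^2)))]
  · rw [hf]; ring
end

section
/- For a ∈ [0,1) and ε ∈ (0,1), the function F_{a,ε}(z,w) := F_a(z,w)/√(1 − (ε²/(2−a²)²)(a²w − bz²)²), where F_a(z,w) = (z² + 2√(1−a²)·w)/(2 − a²) and b = √(1−a²), maps the open unit ball 𝔹² ⊂ ℂ² holomorphically into the open unit disc 𝔻. -/
/-!
Write `P = z² + 2bw` and `Q = a²w - bz²`. Since `a² = 1 - b²`, the map `(z², w) ↦ (P, Q)` has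
Gram matrix `(1 + b²) [[1, b], [b, 1 + b²]]`, i.e. `|P|² + |Q|² = (1 + b²)(|z² + bw|² + |w|²)`,
and on the ball the last bracket is `< 1 + b² = 2 - a²`. Hence `p = P/(2 - a²)` and
`q = εQ/(2 - a²)` satisfy `|p|² + |q|² < 1`, so `|1 - q²| ≥ 1 - |q|² > |p|²` gives
`|p / √(1 - q²)| < 1`; moreover `Re (1 - q²) > 0`, where the principal square root is holomorphic.
-/

/-- The open unit Euclidean ball in ℂ². -/
def unitBall2 : Set (ℂ × ℂ) := {p | ‖p.1‖ ^ 2 + ‖p.2‖ ^ 2 < 1}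

section InnerProductSpace

variable {E : Type*} [NormedAddCommGroup E] [InnerProductSpace ℝ E]

theorem norm_add_two_smul_sq_add_norm_sub_smul_sq (b : ℝ) (u w : E) :
    ‖u + (2 * b) • w‖ ^ 2 + ‖(1 - b ^ 2) • w - b • u‖ ^ 2 =
      (1 + b ^ 2) * (‖u + b • w‖ ^ 2 + ‖w‖ ^ 2) := by
  simp only [norm_add_sq_real, norm_sub_sq_real, norm_smul, inner_smul_left, inner_smul_right,
    real_inner_comm u w, Real.norm_eq_abs, mul_pow, sq_abs, RCLike.conj_to_real]
  ring

theorem add_mul_sq_add_sq_lt {b x t : ℝ} (hb : 0 ≤ b) (hx : 0 ≤ x) (ht : 0 ≤ t)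
    (hxt : x + t ^ 2 < 1) : (x + b * t) ^ 2 + t ^ 2 < 1 + b ^ 2 := by
  have ht1 : t ^ 2 ≤ 1 := by linarith
  -- the left side increases with `x`, and at `x = 1 - t ^ 2` it falls short by `(1 - t²)(t - b)²`
  have hboundary : (1 - t ^ 2 + b * t) ^ 2 + t ^ 2 = 1 + b ^ 2 - (1 - t ^ 2) * (t - b) ^ 2 := by
    ring
  have hlt : (x + b * t) ^ 2 < (1 - t ^ 2 + b * t) ^ 2 := by
    gcongr
    linarith
  nlinarith [mul_nonneg (sub_nonneg.2 ht1) (sq_nonneg (t - b))]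

theorem norm_add_two_smul_sq_add_norm_sub_smul_sq_lt {b : ℝ} (hb : 0 ≤ b) {u w : E}
    (huw : ‖u‖ + ‖w‖ ^ 2 < 1) :
    ‖u + (2 * b) • w‖ ^ 2 + ‖(1 - b ^ 2) • w - b • u‖ ^ 2 < (1 + b ^ 2) ^ 2 := by
  have hle : ‖u + b • w‖ ≤ ‖u‖ + b * ‖w‖ := by
    simpa [norm_smul, abs_of_nonneg hb] using norm_add_le u (b • w)
  have hlt := add_mul_sq_add_sq_lt hb (norm_nonneg u) (norm_nonneg w) huw
  rw [norm_add_two_smul_sq_add_norm_sub_smul_sq, sq (1 + b ^ 2)]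
  refine mul_lt_mul_of_pos_left ?_ (by positivity)
  calc ‖u + b • w‖ ^ 2 + ‖w‖ ^ 2 ≤ (‖u‖ + b * ‖w‖) ^ 2 + ‖w‖ ^ 2 := by gcongr
    _ < 1 + b ^ 2 := hlt

end InnerProductSpace

theorem Complex.one_sub_sq_mem_slitPlane {q : ℂ} (hq : ‖q‖ < 1) : 1 - q ^ 2 ∈ slitPlane := by
  refine Complex.mem_slitPlane_iff.2 (Or.inl ?_)
  have hre : (q ^ 2).re ≤ ‖q‖ ^ 2 := (Complex.re_le_norm _).trans_eq (norm_pow q 2)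
  have hq2 : ‖q‖ ^ 2 < 1 := by nlinarith [norm_nonneg q]
  simp only [sub_re, one_re]
  linarith

theorem Complex.norm_div_cpow_half_lt_one {p q : ℂ} (hpq : ‖p‖ ^ 2 + ‖q‖ ^ 2 < 1) :
    ‖p / (1 - q ^ 2) ^ (1 / 2 : ℂ)‖ < 1 := by
  have hsq : ‖p‖ ^ 2 < ‖1 - q ^ 2‖ := by
    have := norm_sub_norm_le (1 : ℂ) (q ^ 2)
    simp only [norm_one, norm_pow] at this
    linarith
  have hden : ‖(1 - q ^ 2) ^ (1 / 2 : ℂ)‖ = √‖1 - q ^ 2‖ := by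
    rw [show (1 / 2 : ℂ) = ((1 / 2 : ℝ) : ℂ) by push_cast; rfl, Complex.norm_cpow_real,
      Real.sqrt_eq_rpow]
  rw [norm_div, hden, div_lt_one (Real.sqrt_pos.2 ((sq_nonneg _).trans_lt hsq))]
  exact Real.lt_sqrt_of_sq_lt hsq

theorem DifferentiableAt.div_cpow_half {E : Type*} [NormedAddCommGroup E] [NormedSpace ℂ E]
    {f g : E → ℂ} {x : E} (hf : DifferentiableAt ℂ f x) (hg : DifferentiableAt ℂ g x)
    (hgx : ‖g x‖ < 1) : DifferentiableAt ℂ (fun y ↦ f y / (1 - g y ^ 2) ^ (1 / 2 : ℂ)) x := by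
  have hslit := Complex.one_sub_sq_mem_slitPlane hgx
  have hne : (1 - g x ^ 2) ^ (1 / 2 : ℂ) ≠ 0 :=
    (Complex.cpow_ne_zero_iff_of_exponent_ne_zero (by norm_num)).2
      (Complex.slitPlane_ne_zero hslit)
  simp only [div_eq_mul_inv]
  exact hf.mul (((hg.pow 2).const_sub 1).cpow_const hslit |>.inv hne)

theorem sq_norm_add_sq_norm_lt_one_of_mem_unitBall2 {a b ε : ℝ} (hb : 0 ≤ b)
    (hab : b ^ 2 = 1 - a ^ 2) (hε : |ε| ≤ 1) {p : ℂ × ℂ} (hp : p ∈ unitBall2) :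
    ‖(p.1 ^ 2 + 2 * b * p.2) / (2 - a ^ 2)‖ ^ 2 +
      ‖ε * (a ^ 2 * p.2 - b * p.1 ^ 2) / (2 - a ^ 2)‖ ^ 2 < 1 := by
  obtain ⟨z, w⟩ := p
  have ha : (a : ℂ) ^ 2 = ((1 - b ^ 2 : ℝ) : ℂ) := by rw [hab]; push_cast; ring
  have hden : (2 : ℂ) - a ^ 2 = ((1 + b ^ 2 : ℝ) : ℂ) := by rw [ha]; push_cast; ring
  have hlt := norm_add_two_smul_sq_add_norm_sub_smul_sq_lt hb (u := z ^ 2) (w := w)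
    (by rw [norm_pow]; exact hp)
  simp only [Complex.real_smul] at hlt
  push_cast at hlt
  have hε2 : ε ^ 2 ≤ 1 := by nlinarith [sq_abs ε, abs_nonneg ε]
  rw [hden, ha, norm_div, norm_div, norm_mul, div_pow, div_pow, mul_pow, ← add_div,
    Complex.norm_real, Complex.norm_real, Real.norm_eq_abs, Real.norm_eq_abs, sq_abs, sq_abs,
    div_lt_one (by positivity)]
  push_cast
  nlinarith [mul_le_mul_of_nonneg_right hε2 (sq_nonneg ‖(1 - (b : ℂ) ^ 2) * w - b * z ^ 2‖)]

theorem stmt5 (a ε : ℝ) (ha : a ∈ Set.Ico (0:ℝ) 1) (hε : ε ∈ Set.Ioo (0:ℝ) 1)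
    (b : ℝ) (hb : b = Real.sqrt (1 - a^2))
    (F : ℂ × ℂ → ℂ)
    (hF : ∀ p : ℂ × ℂ, F p =
      ((p.1^2 + 2*(b:ℂ)*p.2) / (2 - (a:ℂ)^2)) /
        ((1 - ((ε:ℂ)^2 / (2 - (a:ℂ)^2)^2) * ((a:ℂ)^2*p.2 - (b:ℂ)*p.1^2)^2) ^ ((1:ℂ)/2)) ) :
    DifferentiableOn ℂ F unitBall2 ∧
    Set.MapsTo F unitBall2 (Metric.ball (0:ℂ) 1) := by
  have hab : b ^ 2 = 1 - a ^ 2 := hb ▸ Real.sq_sqrt (by nlinarith [ha.1, ha.2])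
  have hε1 : |ε| ≤ 1 := by rw [abs_of_pos hε.1]; exact hε.2.le
  set f : ℂ × ℂ → ℂ := fun p ↦ (p.1 ^ 2 + 2 * b * p.2) / (2 - a ^ 2)
  set g : ℂ × ℂ → ℂ := fun p ↦ ε * (a ^ 2 * p.2 - b * p.1 ^ 2) / (2 - a ^ 2)
  have hFfg : F = fun p ↦ f p / (1 - g p ^ 2) ^ (1 / 2 : ℂ) := by
    funext p
    rw [hF]
    congr 3
    simp only [g, div_pow, mul_pow, div_mul_eq_mul_div]
  have hfg : ∀ p ∈ unitBall2, ‖f p‖ ^ 2 + ‖g p‖ ^ 2 < 1 := fun p hp ↦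
    sq_norm_add_sq_norm_lt_one_of_mem_unitBall2 (hb ▸ Real.sqrt_nonneg _) hab hε1 hp
  refine ⟨fun p hp ↦ ?_, fun p hp ↦ ?_⟩
  · have hg : ‖g p‖ < 1 := by nlinarith [norm_nonneg (f p), norm_nonneg (g p), hfg p hp]
    rw [hFfg]
    exact (DifferentiableAt.div_cpow_half (by fun_prop) (by fun_prop) hg).differentiableWithinAt
  · simpa [hFfg] using Complex.norm_div_cpow_half_lt_one (hfg p hp)
end

section
/- The function F(z,w) := (2z(1−z) − w²)/(2(1−z) − w²) maps the open unit ball 𝔹² ⊂ ℂ² holomorphically into the open unit disc 𝔻, and satisfies F(λ,0) = λ for every λ ∈ 𝔻. -/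
/-!
Write `a = 1 - z`, so the denominator is `D = 2a - w²` and the numerator is `D - 2a²`. Expanding,
`|D|² - |D - 2a²|² = 4|a|²(1 - |z|² - |w|²) + 8 (Im (w ā))²`, which is positive on the ball
because `a ≠ 0` there. Hence `|F| < 1` (and `D ≠ 0`, so `F` is holomorphic), while on `w = 0`
the quotient is `2λ(1 - λ) / 2(1 - λ) = λ`.
-/

open Complex ComplexConjugate

lemma normSq_denom_sub_normSq_num (z w : ℂ) :
    normSq (2 * (1 - z) - w ^ 2) - normSq (2 * z * (1 - z) - w ^ 2) =
      4 * normSq (1 - z) * (1 - normSq z - normSq w) + 8 * (w * conj (1 - z)).im ^ 2 := by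
  simp only [normSq_apply, pow_two, mul_re, mul_im, sub_re, sub_im, one_re, one_im,
    re_ofNat, im_ofNat, conj_re, conj_im]
  ring

lemma norm_num_lt_norm_denom {z w : ℂ} (h : ‖z‖ ^ 2 + ‖w‖ ^ 2 < 1) :
    ‖2 * z * (1 - z) - w ^ 2‖ < ‖2 * (1 - z) - w ^ 2‖ := by
  rw [← sq_lt_sq₀ (norm_nonneg _) (norm_nonneg _), ← sub_pos, Complex.sq_norm, Complex.sq_norm,
    normSq_denom_sub_normSq_num]
  rw [Complex.sq_norm, Complex.sq_norm] at h
  have hz : z ≠ 1 := by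
    rintro rfl
    simp only [map_one] at h
    linarith [normSq_nonneg w]
  have ha : 0 < normSq (1 - z) := normSq_pos.mpr (sub_ne_zero.mpr hz.symm)
  exact add_pos_of_pos_of_nonneg (mul_pos (mul_pos four_pos ha) (by linarith)) (by positivity)

lemma denom_ne_zero {z w : ℂ} (h : ‖z‖ ^ 2 + ‖w‖ ^ 2 < 1) : 2 * (1 - z) - w ^ 2 ≠ 0 :=
  norm_pos_iff.mp ((norm_nonneg _).trans_lt (norm_num_lt_norm_denom h))

theorem stmt10 (F : ℂ × ℂ → ℂ)
    (hF : ∀ p : ℂ × ℂ, F p = (2*p.1*(1 - p.1) - p.2^2) / (2*(1 - p.1) - p.2^2)) :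
    DifferentiableOn ℂ F unitBall2 ∧
    Set.MapsTo F unitBall2 (Metric.ball (0:ℂ) 1) ∧
    (∀ l ∈ Metric.ball (0:ℂ) 1, F (l, 0) = l) := by
  rw [show F = _ from funext hF]
  refine ⟨?_, fun p hp => ?_, fun l hl => ?_⟩
  · simp only [div_eq_mul_inv]
    fun_prop (disch := exact fun p (hp : p ∈ unitBall2) => denom_ne_zero hp)
  · rw [Metric.mem_ball, dist_zero_right, norm_div]
    exact (div_lt_one ((norm_nonneg _).trans_lt (norm_num_lt_norm_denom hp))).mpr
      (norm_num_lt_norm_denom hp)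
  · have hl' : ‖l‖ ^ 2 + ‖(0 : ℂ)‖ ^ 2 < 1 := by
      rw [mem_ball_zero_iff] at hl
      simpa using pow_lt_one₀ (norm_nonneg l) hl two_ne_zero
    rw [div_eq_iff (denom_ne_zero hl')]
    ring
end

section
/- For τ ∈ ℂ with |τ| = 1 and ω ∈ ℂ with |ω| ≤ 1, the function F_{τ,ω}(z,w) := (2z(1 − τz) − τ̄ω²w²)/(2(1 − τz) − ω²w²) maps the open unit ball 𝔹² ⊂ ℂ² into the closed unit disc and satisfies F_{τ,ω}(λ,0) = λ for all λ ∈ 𝔻. -/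
/-!
With `u = τ z` and `B = ω² w²` one has `F(z, w) = τ̄ (u C - B) / (C - B)` where `C = 2 (1 - u)`,
and `|B| ≤ |w|² < 1 - |u|²` on the ball. Expanding,
`|C - B|² - |u C - B|² = |C|² (1 - |u|²) - 2 Re((1 - u) C B̄) ≥ 4 |1 - u|² (1 - |u|² - |B|) ≥ 0`,
so the quotient has modulus at most one.
-/

open ComplexConjugate

lemma norm_two_one_sub_sub_sq_sub_norm_mul_sub_sq (u B : ℂ) :
    ‖2 * (1 - u) - B‖ ^ 2 - ‖u * (2 * (1 - u)) - B‖ ^ 2 =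
      4 * ‖1 - u‖ ^ 2 * (1 - ‖u‖ ^ 2) - 2 * ((1 - u) * (2 * (1 - u)) * conj B).re := by
  simp only [Complex.sq_norm, Complex.normSq_apply, Complex.mul_re, Complex.mul_im,
    Complex.sub_re, Complex.sub_im, Complex.conj_re, Complex.conj_im, Complex.one_re,
    Complex.one_im, Complex.re_ofNat, Complex.im_ofNat]
  ring

lemma norm_mul_two_one_sub_sub_le {u B : ℂ} (h : ‖B‖ ≤ 1 - ‖u‖ ^ 2) :
    ‖u * (2 * (1 - u)) - B‖ ≤ ‖2 * (1 - u) - B‖ := by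
  have hre : ((1 - u) * (2 * (1 - u)) * conj B).re ≤ 2 * ‖1 - u‖ ^ 2 * ‖B‖ :=
    calc _ ≤ ‖(1 - u) * (2 * (1 - u)) * conj B‖ := Complex.re_le_norm _
      _ = 2 * ‖1 - u‖ ^ 2 * ‖B‖ := by
        rw [norm_mul, norm_mul, norm_mul, Complex.norm_conj, Complex.norm_two]; ring
  have hdiff := norm_two_one_sub_sub_sq_sub_norm_mul_sub_sq u B
  have hpos : 0 ≤ 4 * ‖1 - u‖ ^ 2 * (1 - ‖u‖ ^ 2 - ‖B‖) := by
    have := sub_nonneg.2 h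
    positivity
  exact (sq_le_sq₀ (norm_nonneg _) (norm_nonneg _)).1 (by nlinarith)

theorem stmt13 (τ ω : ℂ) (hτ : ‖τ‖ = 1) (hω : ‖ω‖ ≤ 1)
    (F : ℂ × ℂ → ℂ)
    (hF : ∀ p : ℂ × ℂ, F p =
      (2*p.1*(1 - τ*p.1) - (starRingEnd ℂ) τ * ω^2 * p.2^2) / (2*(1 - τ*p.1) - ω^2*p.2^2)) :
    Set.MapsTo F unitBall2 (Metric.closedBall (0:ℂ) 1) ∧
    (∀ l ∈ Metric.ball (0:ℂ) 1, F (l, 0) = l) := by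
  have hnorm_mul (x : ℂ) : ‖τ * x‖ = ‖x‖ := by rw [norm_mul, hτ, one_mul]
  refine ⟨fun ⟨z, w⟩ hzw => ?_, fun l hl => ?_⟩
  · have hB : ‖ω ^ 2 * w ^ 2‖ ≤ 1 - ‖τ * z‖ ^ 2 := by
      have hω2 : ‖ω‖ ^ 2 ≤ 1 := pow_le_one₀ (norm_nonneg ω) hω
      rw [norm_mul, norm_pow, norm_pow, hnorm_mul]
      simp only [unitBall2, Set.mem_ofPred_eq] at hzw
      nlinarith [sq_nonneg ‖w‖]
    have hconj : conj τ * τ = 1 := by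
      rw [mul_comm, Complex.mul_conj, Complex.normSq_eq_norm_sq, hτ]; norm_num
    have hFzw : F (z, w) = conj τ * ((τ * z) * (2 * (1 - τ * z)) - ω ^ 2 * w ^ 2) /
        (2 * (1 - τ * z) - ω ^ 2 * w ^ 2) := by
      rw [hF]; congr 1; linear_combination -2 * z * (1 - τ * z) * hconj
    rw [mem_closedBall_zero_iff, hFzw, norm_div, norm_mul, Complex.norm_conj, hτ, one_mul]
    exact div_le_one_of_le₀ (norm_mul_two_one_sub_sub_le hB) (norm_nonneg _)
  · have hlt : ‖τ * l‖ < 1 := by rwa [hnorm_mul, ← mem_ball_zero_iff]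
    have hne : 1 - τ * l ≠ 0 := sub_ne_zero.2 fun h => hlt.ne (by rw [← h, norm_one])
    rw [hF, show 2 * l * (1 - τ * l) = l * (2 * (1 - τ * l)) by ring]
    simp [hne]
end

section
/- For every a ∈ (0,1) and every (z,w) ∈ ℂ² with |z|² + |w| < 1 (i.e., (z,w) in the ellipsoid E(1,1/2)), the expression (a²(z−1))² + a²(a²−1)w + (1−a²)² is nonzero. -/
/-!
Put `t = a²`, `s = 1 - a²` and `u = t (z - 1)`. If the expression vanishes, then
`u² + s² = t s w`. Writing `u = x + i y`, one has
`|u² + s²|² - 4 s² x² = (x² + y² - s²)² ≥ 0`, so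
`t s |w| = |u² + s²| ≥ 2 s |Re u| = 2 s t (1 - Re z)`.
But in the ellipsoid `|w| < 1 - |z|² ≤ 1 - (Re z)² ≤ 2 (1 - Re z)`.
-/

theorem Complex.two_mul_abs_mul_abs_re_le_norm_sq_add_sq (u : ℂ) (s : ℝ) :
    2 * |s| * |u.re| ≤ ‖u ^ 2 + (s : ℂ) ^ 2‖ := by
  have hsq : (2 * |s| * |u.re|) ^ 2 ≤ ‖u ^ 2 + (s : ℂ) ^ 2‖ ^ 2 := by
    rw [Complex.sq_norm, Complex.normSq_apply]
    simp only [add_re, add_im, pow_two, mul_re, mul_im, ofReal_re, ofReal_im]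
    nlinarith [sq_nonneg (u.re * u.re + u.im * u.im - s * s), sq_abs s, sq_abs u.re]
  exact (sq_le_sq₀ (by positivity) (norm_nonneg _)).mp hsq

theorem norm_lt_two_mul_one_sub_re_of_sq_norm_add_norm_lt_one {z w : ℂ}
    (hzw : ‖z‖ ^ 2 + ‖w‖ < 1) : ‖w‖ < 2 * (1 - z.re) := by
  have hre : z.re ^ 2 ≤ ‖z‖ ^ 2 := by
    rw [Complex.sq_norm, Complex.normSq_apply]
    nlinarith [sq_nonneg z.im]
  nlinarith [sq_nonneg (1 - z.re)]

theorem stmt16 (a : ℝ) (ha : a ∈ Set.Ioo (0:ℝ) 1) (z w : ℂ)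
    (hzw : ‖z‖ ^ 2 + ‖w‖ < 1) :
    ((a:ℂ)^2*(z - 1))^2 + (a:ℂ)^2*((a:ℂ)^2 - 1)*w + (1 - (a:ℂ)^2)^2 ≠ 0 := by
  intro h
  obtain ⟨ha0, ha1⟩ := ha
  set t : ℝ := a ^ 2
  set s : ℝ := 1 - a ^ 2
  have ht : 0 < t := by positivity
  have hs : 0 < s := by nlinarith
  have hsum : ((t : ℂ) * (z - 1)) ^ 2 + (s : ℂ) ^ 2 = (t * s : ℝ) * w := by
    push_cast [t, s]
    linear_combination h
  have hnorm : ‖((t : ℂ) * (z - 1)) ^ 2 + (s : ℂ) ^ 2‖ = t * s * ‖w‖ := by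
    rw [hsum, norm_mul, Complex.norm_real, Real.norm_of_nonneg (by positivity)]
  have hlower := Complex.two_mul_abs_mul_abs_re_le_norm_sq_add_sq ((t : ℂ) * (z - 1)) s
  have hre : ((t : ℂ) * (z - 1)).re = -(t * (1 - z.re)) := by
    simp only [Complex.mul_re, Complex.ofReal_re, Complex.sub_re, Complex.one_re,
      Complex.ofReal_im, Complex.sub_im, Complex.one_im, sub_zero, zero_mul]
    ring
  rw [hnorm, hre, abs_neg, abs_of_pos hs] at hlower
  have hupper := norm_lt_two_mul_one_sub_re_of_sq_norm_add_norm_lt_one hzw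
  nlinarith [le_abs_self (t * (1 - z.re)), mul_pos ht hs]
end

section
/- For every b ∈ (0,1), r ∈ [0,1), and u ∈ [−1,1], one has r² + (1/(b(1−b)))·√(((1−b) ² + b²(1 − 2ru + r²(2u² − 1)))² + 4b⁴r²(1 − u²)(ru − 1)²) ≥ 1. -/
theorem stmt17 (b r u : ℝ) (hb : b ∈ Set.Ioo (0:ℝ) 1) (hr : r ∈ Set.Ico (0:ℝ) 1)
    (hu : u ∈ Set.Icc (-1:ℝ) 1) :
    r^2 + (1/(b*(1 - b))) *
      Real.sqrt (((1 - b)^2 + b^2*(1 - 2*r*u + r^2*(2*u^2 - 1)))^2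
        + 4*b^4*r^2*(1 - u^2)*(r*u - 1)^2) ≥ 1 := by
  obtain ⟨hb0, hb1⟩ := hb
  obtain ⟨hr0, hr1⟩ := hr
  obtain ⟨hu1, hu2⟩ := hu
  have hbb : 0 < b * (1 - b) := mul_pos hb0 (by linarith)
  set E := ((1 - b)^2 + b^2*(1 - 2*r*u + r^2*(2*u^2 - 1)))^2
        + 4*b^4*r^2*(1 - u^2)*(r*u - 1)^2 with hE
  have hru : 1 - r^2 ≤ 2*(1 - r*u) := by nlinarith [sq_nonneg (1-r)]
  have hr2 : 0 ≤ 1 - r^2 := by nlinarith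
  have hd1 : (0:ℝ) ≤ 2*(1-r*u) - (1-r^2) := by linarith
  have hd2 : (0:ℝ) ≤ 2*(1-r*u) + (1-r^2) := by linarith
  have h2 : (b*(1-b)*(1-r^2))^2 ≤ 4*(1-b)^2*b^2*(1-r*u)^2 := by
    nlinarith [mul_nonneg (mul_nonneg (sq_nonneg (b*(1-b))) hd1) hd2]
  have hkey : (b*(1-b)*(1-r^2))^2 ≤ E := by
    have h1 := sq_nonneg (b^2*(1-r*u)^2 + b^2*r^2*(1-u^2) - (1-b)^2)
    nlinarith [h1, h2]
  have hT : 0 ≤ b*(1-b)*(1-r^2) := mul_nonneg hbb.le hr2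
  have hs : b*(1-b)*(1-r^2) ≤ Real.sqrt E := by
    have := Real.sqrt_le_sqrt hkey
    rwa [Real.sqrt_sq hT] at this
  have : (1/(b*(1 - b))) * Real.sqrt E ≥ 1 - r^2 := by
    have h := mul_le_mul_of_nonneg_left hs (by positivity : (0:ℝ) ≤ 1/(b*(1-b)))
    calc 1 - r^2 = 1/(b*(1-b)) * (b*(1-b)*(1-r^2)) := by field_simp
      _ ≤ 1/(b*(1-b)) * Real.sqrt E := h
  linarith
end

section
/- For any bounded domain Ω ⊆ ℂ^d, pairwise distinct points z₁,…,z_N ∈ Ω, and targets ζ₁,…,ζ_N ∈ 𝔻 not all equal, if there exists a holomorphic f: Ω → 𝔻 with f(z_i) = ζ_i for all i, then t₀ := sup{t > 0 : there is holomorphic g: Ω → 𝔻 with g(z_i) = tζ_i for all i} is attained: there exists a holomorphic F: Ω → 𝔻 with F(z_i) = t₀ζ_i for all i, and the problem z_i ↦ t₀ζ_i is extremal (has no solution with image relatively compact in 𝔻). -/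
/-!
Since `|t ζ i| < 1` for every admissible scale `t`, the supremum `t₀` is finite (and `≥ 1`).
Solutions `gₙ` for scales `tₙ → t₀` are bounded by `1`, hence equicontinuous by the Schwarz lemma;
along an ultrafilter they converge pointwise, hence locally uniformly (Arzelà–Ascoli), and the
limit is holomorphic because the Cauchy estimates make the derivatives converge locally uniformly
as well. The limit takes the values `t₀ ζ i`, so it is
not constant and the maximum modulus principle keeps it inside the open disc. A solution whose
image stays in a compact subset of the disc could be multiplied by some `c > 1`, contradicting the
maximality of `t₀`.
-/

open Metric Set Filter Topology

section Equicontinuity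

variable {ι X α : Type*} [TopologicalSpace X] [UniformSpace α]

theorem EquicontinuousOn.tendstoLocallyUniformlyOn [LocallyCompactSpace X] {F : ι → X → α}
    {f : X → α} {p : Filter ι} {U : Set X} (hF : EquicontinuousOn F U) (hU : IsOpen U)
    (hf : ∀ x ∈ U, Tendsto (F · x) p (𝓝 (f x))) :
    TendstoLocallyUniformlyOn F f p U := by
  rw [tendstoLocallyUniformlyOn_iff_forall_isCompact hU]
  intro K hKU hK
  have := (EquicontinuousOn.tendsto_uniformOnFun_iff_pi' (𝔖 := {K}) (by simpa using hK)
    (by simpa using hF.mono hKU) p f).2 ?_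
  · exact UniformOnFun.tendsto_iff_tendstoUniformlyOn.1 this K rfl
  · rw [tendsto_pi_nhds]
    rintro ⟨x, hx⟩
    exact hf x (hKU (by simpa using hx))

end Equicontinuity

section Holomorphic

variable {ι E F : Type*} [NormedAddCommGroup E] [NormedSpace ℂ E]
  [NormedAddCommGroup F] [NormedSpace ℂ F]

theorem norm_fderiv_le_of_forall_mem_ball_norm_le {f : E → F} {c : E} {r M : ℝ} (hr : 0 < r)
    (hd : DifferentiableOn ℂ f (ball c r)) (hb : ∀ w ∈ ball c r, ‖f w‖ ≤ M) :
    ‖fderiv ℂ f c‖ ≤ 2 * M / r :=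
  Complex.norm_fderiv_le_div_of_mapsTo_ball hd (fun w hw => mem_closedBall_iff_norm.2 <|
    (norm_sub_le _ _).trans (by linarith [hb w hw, hb c (mem_ball_self hr)])) hr

theorem equicontinuousOn_of_forall_norm_le {g : ι → E → F} {U : Set E} {M : ℝ} (hU : IsOpen U)
    (hd : ∀ i, DifferentiableOn ℂ (g i) U) (hb : ∀ i, ∀ x ∈ U, ‖g i x‖ ≤ M) :
    EquicontinuousOn g U := by
  intro x hx
  refine EquicontinuousAt.equicontinuousWithinAt ?_ U
  obtain ⟨r, hr, hrU⟩ := isOpen_iff.1 hU x hx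
  have hmaps (i : ι) : MapsTo (g i) (ball x r) (closedBall (g i x) (2 * M)) := fun w hw =>
    mem_closedBall_iff_norm.2 <|
      (norm_sub_le _ _).trans (by linarith [hb i w (hrU hw), hb i x hx])
  refine Metric.equicontinuousAt_of_continuity_modulus (fun y => 2 * M / r * dist y x) ?_ g ?_
  · simpa using ((tendsto_id (x := 𝓝 x)).dist (tendsto_const_nhds (x := x))).const_mul (2 * M / r)
  · filter_upwards [ball_mem_nhds x hr] with y hy i
    rw [dist_comm]
    exact Complex.dist_le_div_mul_dist_of_mapsTo_ball ((hd i).mono hrU) (hmaps i) hy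

theorem UniformCauchySeqOn.fderiv_ball {G : ι → E → F} {l : Filter ι} {x : E} {r : ℝ}
    (hr : 0 < r) (hG : ∀ n, DifferentiableOn ℂ (G n) (ball x (2 * r)))
    (hC : UniformCauchySeqOn G l (ball x (2 * r))) :
    UniformCauchySeqOn (fun n => fderiv ℂ (G n)) l (ball x r) := by
  intro u hu
  obtain ⟨ε, hε, hεu⟩ := mem_uniformity_dist.1 hu
  filter_upwards [hC _ (dist_mem_uniformity (by positivity : 0 < ε * r / 4))] with m hm y hy
  have hball : ball y r ⊆ ball x (2 * r) := ball_subset_ball' (by linarith [mem_ball.1 hy])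
  have hdiff (n : ι) : DifferentiableAt ℂ (G n) y :=
    (hG n).differentiableAt (isOpen_ball.mem_nhds (hball (mem_ball_self hr)))
  apply hεu
  rw [dist_eq_norm, ← fderiv_sub (hdiff m.1) (hdiff m.2)]
  calc ‖fderiv ℂ (G m.1 - G m.2) y‖ ≤ 2 * (ε * r / 4) / r :=
        norm_fderiv_le_of_forall_mem_ball_norm_le hr (((hG m.1).sub (hG m.2)).mono hball)
          fun w hw => by simpa [dist_eq_norm] using (hm w (hball hw)).le
    _ < ε := by field_simp; linarith

theorem TendstoLocallyUniformlyOn.differentiableOn_of_locallyCompactSpace [LocallyCompactSpace E]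
    [CompleteSpace F] {G : ι → E → F} {f : E → F} {l : Filter ι} [l.NeBot] {U : Set E}
    (hf : TendstoLocallyUniformlyOn G f l U) (hG : ∀ n, DifferentiableOn ℂ (G n) U)
    (hU : IsOpen U) : DifferentiableOn ℂ f U := by
  intro x hx
  have hloc := (tendstoLocallyUniformlyOn_TFAE G f l hU).out 0 2
  obtain ⟨v, hv, hGv⟩ := hloc.1 hf x hx
  rw [hU.nhdsWithin_eq hx] at hv
  obtain ⟨ε, hε, hεv⟩ := Metric.mem_nhds_iff.1 (inter_mem hv (hU.mem_nhds hx))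
  have hsub : ball x (2 * (ε / 2)) ⊆ v ∩ U := by rwa [mul_div_cancel₀ _ two_ne_zero]
  have hC := (hGv.mono fun y hy => (hsub hy).1).uniformCauchySeqOn.fderiv_ball (half_pos hε)
    fun n => (hG n).mono fun y hy => (hsub hy).2
  have hlim (y : E) (hy : y ∈ ball x (ε / 2)) : ∃ L, Tendsto (fun n => fderiv ℂ (G n) y) l (𝓝 L) :=
    cauchy_map_iff_exists_tendsto.1 (hC.cauchy_map hy)
  choose! f' hf' using hlim
  have hsub' : ball x (ε / 2) ⊆ U := fun y hy => (hsub (ball_subset_ball (by linarith) hy)).2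
  refine (hasFDerivAt_of_tendstoUniformlyOn isOpen_ball (hC.tendstoUniformlyOn_of_tendsto hf')
    (fun n y hy => ((hG n).differentiableAt (hU.mem_nhds (hsub' hy))).hasFDerivAt)
    (fun y hy => hf.tendsto_at (hsub' hy)) (mem_ball_self (half_pos hε))).differentiableAt
    |>.differentiableWithinAt

theorem Ultrafilter.exists_tendstoLocallyUniformlyOn_of_forall_norm_le [LocallyCompactSpace E]
    [ProperSpace F] {g : ι → E → F} {U : Set E} {M : ℝ} (𝒰 : Ultrafilter ι) (hU : IsOpen U)
    (hd : ∀ i, DifferentiableOn ℂ (g i) U) (hb : ∀ i, ∀ x ∈ U, ‖g i x‖ ≤ M) :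
    ∃ f, TendstoLocallyUniformlyOn g f 𝒰 U := by
  have hlim (x : E) : ∃ a, x ∈ U → Tendsto (g · x) 𝒰 (𝓝 a) := by
    by_cases hx : x ∈ U
    · obtain ⟨a, -, ha⟩ := (isCompact_closedBall (0 : F) M).ultrafilter_le_nhds'
        (𝒰.map (g · x)) (Ultrafilter.mem_map.2 (univ_mem' fun i => by simpa using hb i x hx))
      exact ⟨a, fun _ => ha⟩
    · exact ⟨0, fun h => absurd h hx⟩
  choose f hf using hlim
  exact ⟨f, (equicontinuousOn_of_forall_norm_le hU hd hb).tendstoLocallyUniformlyOn hU hf⟩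

theorem mapsTo_ball_of_forall_norm_le [StrictConvexSpace ℝ F] {f : E → F} {U : Set E} {R : ℝ}
    (hU : IsPreconnected U) (hUo : IsOpen U) (hf : DifferentiableOn ℂ f U)
    (hle : ∀ x ∈ U, ‖f x‖ ≤ R) (hne : ∃ x ∈ U, ∃ y ∈ U, f x ≠ f y) :
    MapsTo f U (ball 0 R) := by
  intro x hx
  rw [mem_ball_zero_iff]
  refine (hle x hx).lt_of_ne fun hxR => ?_
  obtain ⟨a, ha, b, hb, hab⟩ := hne
  have hconst := Complex.eqOn_of_isPreconnected_of_isMaxOn_norm hU hUo hf hx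
    fun y hy => (hle y hy).trans hxR.ge
  exact hab ((hconst ha).trans (hconst hb).symm)

end Holomorphic

section Interpolation

variable {ι α E : Type*} [NormedAddCommGroup E] [NormedSpace ℂ E]

def IsPickSolvable (Ω : Set E) (z : α → E) (w : α → ℂ) : Prop :=
  ∃ f : E → ℂ, DifferentiableOn ℂ f Ω ∧ MapsTo f Ω (ball 0 1) ∧ ∀ i, f (z i) = w i

variable {Ω : Set E} {z : α → E}

theorem IsPickSolvable.of_tendsto [LocallyCompactSpace E] (hΩo : IsOpen Ω)
    (hΩc : IsPreconnected Ω) (hz : ∀ i, z i ∈ Ω) {l : Filter ι} [l.NeBot] {w : ι → α → ℂ}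
    {w₀ : α → ℂ} (hw : ∀ n, IsPickSolvable Ω z (w n))
    (hlim : ∀ i, Tendsto (fun n => w n i) l (𝓝 (w₀ i))) (hne : ∃ i j, w₀ i ≠ w₀ j) :
    IsPickSolvable Ω z w₀ := by
  choose g hgd hgm hgz using hw
  have hgb (n : ι) (x : E) (hx : x ∈ Ω) : ‖g n x‖ ≤ 1 := (mem_ball_zero_iff.1 (hgm n hx)).le
  obtain ⟨f, hf⟩ :=
    (Ultrafilter.of l).exists_tendstoLocallyUniformlyOn_of_forall_norm_le hΩo hgd hgb
  have hfz (i : α) : f (z i) = w₀ i := by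
    refine tendsto_nhds_unique (hf.tendsto_at (hz i)) ?_
    simpa only [hgz] using (hlim i).mono_left (Ultrafilter.of_le l)
  have hfd := hf.differentiableOn_of_locallyCompactSpace hgd hΩo
  have hfb (x : E) (hx : x ∈ Ω) : ‖f x‖ ≤ 1 :=
    le_of_tendsto (hf.tendsto_at hx).norm (Eventually.of_forall fun n => hgb n x hx)
  obtain ⟨i, j, hij⟩ := hne
  exact ⟨f, hfd, mapsTo_ball_of_forall_norm_le hΩc hΩo hfd hfb
    ⟨z i, hz i, z j, hz j, by rwa [hfz, hfz]⟩, hfz⟩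

theorem exists_one_lt_isPickSolvable_mul {G : E → ℂ} {w : α → ℂ}
    (hGd : DifferentiableOn ℂ G Ω) (hG : closure (G '' Ω) ⊆ ball 0 1) (hGz : ∀ i, G (z i) = w i) :
    ∃ c : ℝ, 1 < c ∧ IsPickSolvable Ω z fun i => c * w i := by
  obtain ⟨ρ, ⟨hρ0, hρ1⟩, hρ⟩ := exists_pos_lt_subset_ball one_pos isClosed_closure hG
  refine ⟨ρ⁻¹, one_lt_inv₀ hρ0 |>.2 hρ1, fun x => (ρ⁻¹ : ℝ) * G x,
    (differentiableOn_const _).mul hGd, fun x hx => ?_, fun i => by simp only [hGz]⟩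
  have hGx : ‖G x‖ < ρ := mem_ball_zero_iff.1 (hρ (subset_closure (mem_image_of_mem G hx)))
  rw [mem_ball_zero_iff, norm_mul, Complex.norm_real, Real.norm_of_nonneg (by positivity)]
  calc ρ⁻¹ * ‖G x‖ < ρ⁻¹ * ρ := by gcongr
    _ = 1 := inv_mul_cancel₀ hρ0.ne'

theorem bddAbove_setOf_isPickSolvable_mul {w : α → ℂ} {i : α} (hz : z i ∈ Ω) (hw : w i ≠ 0) :
    BddAbove {t : ℝ | 0 < t ∧ IsPickSolvable Ω z fun j => t * w j} := by
  refine ⟨‖w i‖⁻¹, ?_⟩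
  rintro t ⟨ht, f, -, hfm, hfz⟩
  have hlt : ‖f (z i)‖ < 1 := mem_ball_zero_iff.1 (hfm hz)
  rw [hfz, norm_mul, Complex.norm_real, Real.norm_of_nonneg ht.le] at hlt
  rw [← one_div, le_div_iff₀ (norm_pos_iff.2 hw)]
  exact hlt.le

end Interpolation

theorem stmt19_general (d N : ℕ)
    (Ω : Set (Fin d → ℂ)) (hΩo : IsOpen Ω) (hΩc : IsConnected Ω)
    (z : Fin N → (Fin d → ℂ)) (hzΩ : ∀ i, z i ∈ Ω)
    (ζ : Fin N → ℂ)
    (hζne : ∃ i j, ζ i ≠ ζ j)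
    (hsol : ∃ f : (Fin d → ℂ) → ℂ, DifferentiableOn ℂ f Ω ∧
      Set.MapsTo f Ω (Metric.ball (0:ℂ) 1) ∧ ∀ i, f (z i) = ζ i)
    (t₀ : ℝ)
    (ht₀ : t₀ = sSup {t : ℝ | 0 < t ∧ ∃ g : (Fin d → ℂ) → ℂ, DifferentiableOn ℂ g Ω ∧
      Set.MapsTo g Ω (Metric.ball (0:ℂ) 1) ∧ ∀ i, g (z i) = (t:ℂ) * ζ i}) :
    (∃ F : (Fin d → ℂ) → ℂ, DifferentiableOn ℂ F Ω ∧
      Set.MapsTo F Ω (Metric.ball (0:ℂ) 1) ∧ ∀ i, F (z i) = (t₀:ℂ) * ζ i) ∧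
    ¬ ∃ G : (Fin d → ℂ) → ℂ, DifferentiableOn ℂ G Ω ∧
      Set.MapsTo G Ω (Metric.ball (0:ℂ) 1) ∧
      IsCompact (closure (G '' Ω)) ∧ closure (G '' Ω) ⊆ Metric.ball (0:ℂ) 1 ∧
      ∀ i, G (z i) = (t₀:ℂ) * ζ i := by
  set S := {t : ℝ | 0 < t ∧ IsPickSolvable Ω z fun i => t * ζ i}
  change t₀ = sSup S at ht₀
  obtain ⟨i, j, hij⟩ := hζne
  obtain ⟨k, hk⟩ : ∃ k, ζ k ≠ 0 := by
    by_contra! h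
    exact hij ((h i).trans (h j).symm)
  have hbdd : BddAbove S := bddAbove_setOf_isPickSolvable_mul (hzΩ k) hk
  have h1S : (1 : ℝ) ∈ S := by
    have hsol' : IsPickSolvable Ω z ζ := hsol
    exact ⟨one_pos, by simpa only [Complex.ofReal_one, one_mul] using hsol'⟩
  have ht₀pos : 0 < t₀ := one_pos.trans_le (ht₀ ▸ le_csSup hbdd h1S)
  constructor
  · obtain ⟨t, -, ht, htS⟩ := exists_seq_tendsto_sSup ⟨1, h1S⟩ hbdd
    refine IsPickSolvable.of_tendsto (l := atTop) hΩo hΩc.isPreconnected hzΩ (fun n => (htS n).2)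
      (fun m => ?_) ⟨i, j, ?_⟩
    · exact ((Complex.continuous_ofReal.tendsto _).comp (ht₀ ▸ ht)).mul_const (ζ m)
    · simpa [ht₀pos.ne'] using hij
  · rintro ⟨G, hGd, -, -, hGs, hGz⟩
    obtain ⟨c, hc, hcS⟩ := exists_one_lt_isPickSolvable_mul hGd hGs hGz
    have hmem : c * t₀ ∈ S :=
      ⟨by positivity, by simpa only [Complex.ofReal_mul, mul_assoc] using hcS⟩
    have := ht₀ ▸ le_csSup hbdd hmem
    nlinarith

theorem stmt19 (d N : ℕ) (hN : 2 ≤ N)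
    (Ω : Set (Fin d → ℂ)) (hΩo : IsOpen Ω) (hΩc : IsConnected Ω)
    (hΩb : Bornology.IsBounded Ω)
    (z : Fin N → (Fin d → ℂ)) (hz : Function.Injective z) (hzΩ : ∀ i, z i ∈ Ω)
    (ζ : Fin N → ℂ) (hζ : ∀ i, ‖ζ i‖ < 1)
    (hζne : ∃ i j, ζ i ≠ ζ j)
    (hsol : ∃ f : (Fin d → ℂ) → ℂ, DifferentiableOn ℂ f Ω ∧
      Set.MapsTo f Ω (Metric.ball (0:ℂ) 1) ∧ ∀ i, f (z i) = ζ i)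
    (t₀ : ℝ)
    (ht₀ : t₀ = sSup {t : ℝ | 0 < t ∧ ∃ g : (Fin d → ℂ) → ℂ, DifferentiableOn ℂ g Ω ∧
      Set.MapsTo g Ω (Metric.ball (0:ℂ) 1) ∧ ∀ i, g (z i) = (t:ℂ) * ζ i}) :
    (∃ F : (Fin d → ℂ) → ℂ, DifferentiableOn ℂ F Ω ∧
      Set.MapsTo F Ω (Metric.ball (0:ℂ) 1) ∧ ∀ i, F (z i) = (t₀:ℂ) * ζ i) ∧
    ¬ ∃ G : (Fin d → ℂ) → ℂ, DifferentiableOn ℂ G Ω ∧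
      Set.MapsTo G Ω (Metric.ball (0:ℂ) 1) ∧
      IsCompact (closure (G '' Ω)) ∧ closure (G '' Ω) ⊆ Metric.ball (0:ℂ) 1 ∧
      ∀ i, G (z i) = (t₀:ℂ) * ζ i :=
  stmt19_general d N Ω hΩo hΩc z hzΩ ζ hζne hsol t₀ ht₀
end
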